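/- Let A be a unital C*-algebra, let Z be a normed space, let φ : A × A → Z be a continuous bilinear map, and let ε ≥ 0 be a constant such that ‖φ(a,b)‖ ≤ ε‖a‖‖b‖ whenever a, b are positive elements of A with ab = 0. Then ‖φ(a,1) − φ(1,a)‖ ≤ 8ε‖a‖ for every a ∈ A. -/

import Mathlib

/-!
For self-adjoint `x` with `‖x‖ ≤ 1` and `n + 1 = 2 ^ L`, continuous functional calculus with
piecewise linear ramps gives positive contractions `e₀ ≥ e₁ ≥ ⋯ ≥ e_{n+1} = 0` with
`x = (2 / n) ∑_{k<n} e_{k+1} - 1` and `e_{k+1} (1 - e_k) = 0`. Writing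
`1 = (1 - e_k) + d_k + e_{k+1}` with `d_k = e_k - e_{k+1}`, the commutator
`φ(e_{k+1}, 1) - φ(1, e_{k+1})` splits into `φ(e_{k+1}, 1 - e_k) - φ(1 - e_k, e_{k+1})`, of norm
at most `2ε` since the two factors are orthogonal positive contractions, and
`φ(e_{k+1}, d_k) - φ(d_k, e_{k+1})`, whose sums over `k` are the triangular truncations
`∑_{k<j} φ(d_j, d_k)` of `φ` and its flip. As `‖∑ z_k d_k‖ ≤ 1` whenever `|z_k| ≤ 1`, a dyadic
splitting of the triangle combined with averaging over signs bounds each truncation by `L ‖φ‖`.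
Hence `‖φ(x, 1) - φ(1, x)‖ ≤ 4ε + 4 L ‖φ‖ / (2 ^ L - 1)`, and `L → ∞` gives `4ε`; splitting a
general `a` into real and imaginary parts doubles the constant.
-/

open Finset Filter Topology ComplexStarModule

noncomputable def clampUnit (s : ℝ) : ℝ := max 0 (min 1 s)

theorem continuous_clampUnit : Continuous clampUnit := by unfold clampUnit; fun_prop

theorem monotone_clampUnit : Monotone clampUnit :=
  fun _ _ h => max_le_max le_rfl (min_le_min le_rfl h)

theorem clampUnit_mem_Icc (s : ℝ) : clampUnit s ∈ Set.Icc 0 1 :=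
  ⟨le_max_left _ _, max_le zero_le_one (min_le_left _ _)⟩

theorem clampUnit_of_nonpos {s : ℝ} (hs : s ≤ 0) : clampUnit s = 0 := by
  simp [clampUnit, hs, hs.trans zero_le_one]

theorem clampUnit_of_one_le {s : ℝ} (hs : 1 ≤ s) : clampUnit s = 1 := by
  simp [clampUnit, hs]

theorem clampUnit_of_mem_Icc {s : ℝ} (h₀ : 0 ≤ s) (h₁ : s ≤ 1) : clampUnit s = s := by
  simp [clampUnit, h₀, h₁]

theorem clampUnit_sub_one_mul_one_sub (s : ℝ) : clampUnit (s - 1) * (1 - clampUnit s) = 0 := by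
  rcases le_total 1 s with hs | hs
  · simp [clampUnit_of_one_le hs]
  · simp [clampUnit_of_nonpos (sub_nonpos.mpr hs)]

theorem sum_range_clampUnit_sub {s : ℝ} {N : ℕ} (h₀ : 0 ≤ s) (hN : s ≤ N) :
    ∑ k ∈ range N, clampUnit (s - k) = s := by
  induction N with
  | zero => simp [le_antisymm (by exact_mod_cast hN) h₀]
  | succ N ih =>
    rw [sum_range_succ]
    rcases le_total s N with hsN | hsN
    · rw [ih hsN, clampUnit_of_nonpos (sub_nonpos.mpr hsN), add_zero]
    · have hone : ∀ k ∈ range N, clampUnit (s - k) = 1 := fun k hk => by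
        have : (k : ℝ) + 1 ≤ N := by exact_mod_cast mem_range.mp hk
        exact clampUnit_of_one_le (by linarith)
      rw [sum_congr rfl hone,
        clampUnit_of_mem_Icc (sub_nonneg.mpr hsN) (by push_cast at hN; linarith)]
      simp

theorem abs_sum_mul_sub_le {a : ℕ → ℝ} (ha : ∀ k, a (k + 1) ≤ a k) {z : ℕ → ℝ}
    (hz : ∀ k, |z k| ≤ 1) (m : ℕ) :
    |∑ k ∈ range m, z k * (a k - a (k + 1))| ≤ a 0 - a m := by
  calc |∑ k ∈ range m, z k * (a k - a (k + 1))|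
      ≤ ∑ k ∈ range m, |z k| * (a k - a (k + 1)) := by
        refine (abs_sum_le_sum_abs _ _).trans_eq (sum_congr rfl fun k _ => ?_)
        rw [abs_mul, abs_of_nonneg (sub_nonneg.mpr (ha k))]
    _ ≤ ∑ k ∈ range m, (a k - a (k + 1)) :=
        sum_le_sum fun k _ => mul_le_of_le_one_left (sub_nonneg.mpr (ha k)) (hz k)
    _ = a 0 - a m := sum_range_sub' a m

theorem tendsto_natCast_div_two_pow_sub_one :
    Tendsto (fun L : ℕ => (L : ℝ) / (2 ^ L - 1)) atTop (𝓝 0) := by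
  have h := (tendsto_pow_const_div_const_pow_of_one_lt 1 (one_lt_two (α := ℝ))).const_mul 2
  rw [mul_zero] at h
  refine tendsto_of_tendsto_of_tendsto_of_le_of_le' tendsto_const_nhds h ?_ ?_ <;>
    filter_upwards [eventually_ge_atTop 1] with L hL <;>
    have h2 : (2 : ℝ) ≤ 2 ^ L := by simpa using pow_le_pow_right₀ one_le_two hL
  · exact div_nonneg L.cast_nonneg (by linarith)
  · rw [pow_one, mul_div_assoc', div_le_div_iff₀ (by linarith) (by linarith)]
    nlinarith [L.cast_nonneg (α := ℝ)]

/-- On `[-1, 1]`, `ramp n 0 = 1` and `ramp n (k + 1)` rises linearly from `0` to `1` on the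
`k`-th of the `n` equal subintervals. -/
noncomputable def ramp (n k : ℕ) (t : ℝ) : ℝ := clampUnit ((t + 1) * n / 2 + 1 - k)

theorem continuous_ramp (n k : ℕ) : Continuous (ramp n k) :=
  continuous_clampUnit.comp (by fun_prop)

theorem ramp_succ_le (n k : ℕ) (t : ℝ) : ramp n (k + 1) t ≤ ramp n k t :=
  monotone_clampUnit (by push_cast; linarith)

theorem ramp_mem_Icc (n k : ℕ) (t : ℝ) : ramp n k t ∈ Set.Icc 0 1 :=
  clampUnit_mem_Icc _

theorem ramp_succ_mul_one_sub (n k : ℕ) (t : ℝ) : ramp n (k + 1) t * (1 - ramp n k t) = 0 := by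
  simpa [ramp, sub_add_eq_sub_sub] using clampUnit_sub_one_mul_one_sub ((t + 1) * n / 2 + 1 - k)

theorem ramp_self_add_one_eq_zero {n : ℕ} {t : ℝ} (ht : t ≤ 1) : ramp n (n + 1) t = 0 :=
  clampUnit_of_nonpos (by push_cast; nlinarith [(n.cast_nonneg : (0 : ℝ) ≤ n)])

theorem sum_range_ramp_succ {n : ℕ} {t : ℝ} (ht : t ∈ Set.Icc (-1) 1) :
    ∑ k ∈ range n, ramp n (k + 1) t = (t + 1) * n / 2 := by
  have hn : (0 : ℝ) ≤ n := n.cast_nonneg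
  obtain ⟨h₁, h₂⟩ := ht
  rw [← sum_range_clampUnit_sub (s := (t + 1) * n / 2) (N := n) (by nlinarith) (by nlinarith)]
  refine sum_congr rfl fun k _ => congrArg clampUnit ?_
  push_cast; ring

section Bilinear

variable {E F Z : Type*} [NormedAddCommGroup E] [NormedSpace ℂ E] [NormedAddCommGroup F]
  [NormedSpace ℂ F] [NormedAddCommGroup Z] [NormedSpace ℂ Z]

theorem norm_add_smul_add_sum_le_of_insert {ι G : Type*} [DecidableEq ι]
    [SeminormedAddCommGroup G] [Module ℝ G] {s : Finset ι} {a : ι} (ha : a ∉ s) (u : G)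
    (W : ι → G) {c : ℝ} (hc : |c| ≤ 1)
    (hW : ∀ z : ι → ℝ, (∀ i, |z i| ≤ 1) → ‖u + ∑ i ∈ insert a s, z i • W i‖ ≤ 1)
    (z : ι → ℝ) (hz : ∀ i, |z i| ≤ 1) : ‖u + c • W a + ∑ i ∈ s, z i • W i‖ ≤ 1 := by
  have h := hW (Function.update z a c) fun i => by
    rcases eq_or_ne i a with rfl | hi
    · simpa using hc
    · simpa [hi] using hz i
  rwa [sum_insert ha, Function.update_self, ← add_assoc,
    sum_congr rfl fun i hi => by rw [Function.update_of_ne (ne_of_mem_of_not_mem hi ha)]] at h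

/-- Averaging over the sign of the last term: `φ (x + u) (y + v) + φ (x - u) (y - v)` equals
`2 (φ x y + φ u v)`. -/
theorem norm_add_sum_apply_le_of_unconditional {ι : Type*} (φ : E →L[ℂ] F →L[ℂ] Z)
    (s : Finset ι) (U : ι → E) (V : ι → F) (x : E) (y : F)
    (hU : ∀ z : ι → ℝ, (∀ i, |z i| ≤ 1) → ‖x + ∑ i ∈ s, z i • U i‖ ≤ 1)
    (hV : ∀ z : ι → ℝ, (∀ i, |z i| ≤ 1) → ‖y + ∑ i ∈ s, z i • V i‖ ≤ 1) :
    ‖φ x y + ∑ i ∈ s, φ (U i) (V i)‖ ≤ ‖φ‖ := by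
  classical
  induction s using Finset.induction_on generalizing x y with
  | empty =>
    have hx := hU 0 (by simp)
    have hy := hV 0 (by simp)
    simp only [sum_empty, add_zero] at hx hy ⊢
    calc ‖φ x y‖ ≤ ‖φ‖ * ‖x‖ * ‖y‖ := φ.le_opNorm₂ x y
      _ ≤ ‖φ‖ * 1 * 1 := by gcongr
      _ = ‖φ‖ := by ring
  | insert a s ha ih =>
    have hplus := ih (x + (1 : ℝ) • U a) (y + (1 : ℝ) • V a)
      (norm_add_smul_add_sum_le_of_insert ha x U (by simp) hU)
      (norm_add_smul_add_sum_le_of_insert ha y V (by simp) hV)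
    have hminus := ih (x + (-1 : ℝ) • U a) (y + (-1 : ℝ) • V a)
      (norm_add_smul_add_sum_le_of_insert ha x U (by simp) hU)
      (norm_add_smul_add_sum_le_of_insert ha y V (by simp) hV)
    have hpolar : (φ (x + (1 : ℝ) • U a) (y + (1 : ℝ) • V a) + ∑ i ∈ s, φ (U i) (V i))
        + (φ (x + (-1 : ℝ) • U a) (y + (-1 : ℝ) • V a) + ∑ i ∈ s, φ (U i) (V i))
        = (2 : ℝ) • (φ x y + ∑ i ∈ insert a s, φ (U i) (V i)) := by
      simp only [one_smul, neg_one_smul, map_add, map_neg, add_apply,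
        neg_apply, sum_insert ha]
      module
    have h2 := (norm_add_le _ _).trans (add_le_add hplus hminus)
    rw [hpolar, norm_smul, Real.norm_ofNat] at h2
    linarith

noncomputable def triSum (φ : E →L[ℂ] E →L[ℂ] Z) (d : ℕ → E) (N : ℕ) : Z :=
  ∑ j ∈ range N, ∑ k ∈ range j, φ (d j) (d k)

theorem triSum_add (φ : E →L[ℂ] E →L[ℂ] Z) (d : ℕ → E) (M N : ℕ) :
    triSum φ d (M + N) = triSum φ d M + triSum φ (fun i => d (M + i)) N
      + φ (∑ i ∈ range N, d (M + i)) (∑ i ∈ range M, d i) := by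
  simp only [triSum, sum_range_add, map_sum, _root_.sum_apply, sum_add_distrib]
  rw [sum_comm]
  abel

theorem sum_apply_sub_eq_triSum (φ : E →L[ℂ] E →L[ℂ] Z) (e : ℕ → E) (N : ℕ) :
    ∑ k ∈ range N, φ (e (k + 1) - e N) (e k - e (k + 1))
      = triSum φ (fun k => e k - e (k + 1)) N := by
  induction N with
  | zero => simp [triSum]
  | succ N ih =>
    have hsplit : ∀ k, e (k + 1) - e (N + 1) = (e (k + 1) - e N) + (e N - e (N + 1)) :=
      fun k => by abel
    rw [sum_range_succ, sub_self, map_zero, zero_apply, add_zero]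
    simp only [hsplit, map_add, add_apply, sum_add_distrib, ih]
    rw [triSum, triSum, sum_range_succ]

theorem norm_sum_add_sum_shift_le {ι : Type*} [Fintype ι] {M N : ℕ} (d : ι → ℕ → E)
    (hd : ∀ z : ι → ℕ → ℝ, (∀ β i, |z β i| ≤ 1) →
      ‖∑ β, ∑ i ∈ range (M + N), z β i • d β i‖ ≤ 1)
    (z₁ z₂ : ι → ℕ → ℝ) (h₁ : ∀ β i, |z₁ β i| ≤ 1) (h₂ : ∀ β i, |z₂ β i| ≤ 1) :
    ‖∑ β, (∑ i ∈ range M, z₁ β i • d β i + ∑ i ∈ range N, z₂ β i • d β (M + i))‖ ≤ 1 := by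
  convert hd (fun β i => if i < M then z₁ β i else z₂ β (i - M))
    (fun β i => by split_ifs <;> simp [h₁, h₂]) using 3 with β
  rw [sum_range_add]
  congr 1 <;> refine sum_congr rfl fun i hi => ?_
  · simp [mem_range.mp hi]
  · simp

/-- Each block of length `2 ^ (L + 1)` splits into two blocks of length `2 ^ L` and a cross term;
the cross terms of all blocks are bounded together by sign averaging, so every doubling of the
block length costs only `‖φ‖`. -/
theorem norm_sum_triSum_le {ι : Type*} [Fintype ι] (φ : E →L[ℂ] E →L[ℂ] Z) (L : ℕ)
    (d : ι → ℕ → E)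
    (hd : ∀ z : ι → ℕ → ℝ, (∀ β i, |z β i| ≤ 1) →
      ‖∑ β, ∑ i ∈ range (2 ^ L), z β i • d β i‖ ≤ 1) :
    ‖∑ β, triSum φ (d β) (2 ^ L)‖ ≤ L * ‖φ‖ := by
  induction L generalizing ι with
  | zero => simp [triSum]
  | succ L ih =>
    rw [pow_succ, mul_two] at hd ⊢
    set N := 2 ^ L
    have halves := norm_sum_add_sum_shift_le d hd
    have hhalves : ∀ p : ι ⊕ ι → ℕ → ℝ, (∀ q i, |p q i| ≤ 1) →
        ‖∑ q, ∑ i ∈ range N, p q i • Sum.elim d (fun β i => d β (N + i)) q i‖ ≤ 1 := by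
      intro p hp
      simpa only [Fintype.sum_sum_type, Sum.elim_inl, Sum.elim_inr, ← sum_add_distrib] using
        halves (fun β => p (.inl β)) (fun β => p (.inr β)) (fun β => hp _) (fun β => hp _)
    have hcross : ‖∑ β, φ (∑ i ∈ range N, d β (N + i)) (∑ i ∈ range N, d β i)‖ ≤ ‖φ‖ := by
      simpa using norm_add_sum_apply_le_of_unconditional φ univ
        (fun β => ∑ i ∈ range N, d β (N + i)) (fun β => ∑ i ∈ range N, d β i) 0 0
        (fun z hz => by
          simpa [smul_sum] using halves 0 (fun β _ => z β) (by simp) (fun β _ => hz β))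
        (fun z hz => by
          simpa [smul_sum] using halves (fun β _ => z β) 0 (fun β _ => hz β) (by simp))
    have hsplit : ∑ β, triSum φ (d β) (N + N)
        = ∑ q, triSum φ (Sum.elim d (fun β i => d β (N + i)) q) N
          + ∑ β, φ (∑ i ∈ range N, d β (N + i)) (∑ i ∈ range N, d β i) := by
      simp only [triSum_add, Fintype.sum_sum_type, Sum.elim_inl, Sum.elim_inr, sum_add_distrib]
    calc ‖∑ β, triSum φ (d β) (N + N)‖
        ≤ L * ‖φ‖ + ‖φ‖ := hsplit ▸ (norm_add_le _ _).trans (add_le_add (ih _ hhalves) hcross)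
      _ = (L + 1 : ℕ) * ‖φ‖ := by push_cast; ring

theorem norm_triSum_le (φ : E →L[ℂ] E →L[ℂ] Z) (L : ℕ) (d : ℕ → E)
    (hd : ∀ z : ℕ → ℝ, (∀ i, |z i| ≤ 1) → ‖∑ i ∈ range (2 ^ L), z i • d i‖ ≤ 1) :
    ‖triSum φ d (2 ^ L)‖ ≤ L * ‖φ‖ := by
  simpa using norm_sum_triSum_le φ L (fun _ : Unit => d) fun z hz => by
    simpa using hd (z ()) (hz ())

theorem norm_sum_apply_sub_apply_le (φ : E →L[ℂ] E →L[ℂ] Z) (w : E) (e : ℕ → E) {n L : ℕ}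
    (hL : n + 1 = 2 ^ L) (he : e (n + 1) = 0) {δ : ℝ}
    (hδ : ∀ k < n, ‖φ (e (k + 1)) (w - e k) - φ (w - e k) (e (k + 1))‖ ≤ δ)
    (hd : ∀ z : ℕ → ℝ, (∀ i, |z i| ≤ 1) → ‖∑ i ∈ range (n + 1), z i • (e i - e (i + 1))‖ ≤ 1) :
    ‖∑ k ∈ range n, (φ (e (k + 1)) w - φ w (e (k + 1)))‖ ≤ n * δ + 2 * L * ‖φ‖ := by
  set d := fun k => e k - e (k + 1)
  have hw : ∀ k, w = (w - e k) + d k + e (k + 1) := fun k => by simp only [d]; abel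
  have htri : ∀ ψ : E →L[ℂ] E →L[ℂ] Z,
      ∑ k ∈ range n, ψ (e (k + 1)) (d k) = triSum ψ d (n + 1) := fun ψ => by
    rw [← sum_apply_sub_eq_triSum, sum_range_succ, he]
    simp [d]
  have hdecomp : ∑ k ∈ range n, (φ (e (k + 1)) w - φ w (e (k + 1)))
      = ∑ k ∈ range n, (φ (e (k + 1)) (w - e k) - φ (w - e k) (e (k + 1)))
        + (triSum φ d (n + 1) - triSum φ.flip d (n + 1)) := by
    rw [← htri, ← htri, ← sum_sub_distrib, ← sum_add_distrib]
    refine sum_congr rfl fun k _ => ?_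
    conv_lhs => rw [hw k]
    simp only [map_add, add_apply, ContinuousLinearMap.flip_apply]
    abel
  have hbound : ∀ ψ : E →L[ℂ] E →L[ℂ] Z, ‖triSum ψ d (n + 1)‖ ≤ L * ‖ψ‖ :=
    fun ψ => hL ▸ norm_triSum_le ψ L d (hL ▸ hd)
  rw [hdecomp]
  calc _ ≤ ∑ k ∈ range n, ‖φ (e (k + 1)) (w - e k) - φ (w - e k) (e (k + 1))‖
          + (‖triSum φ d (n + 1)‖ + ‖triSum φ.flip d (n + 1)‖) :=
        (norm_add_le _ _).trans (add_le_add (norm_sum_le _ _) (norm_sub_le _ _))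
    _ ≤ ∑ _k ∈ range n, δ + (L * ‖φ‖ + L * ‖φ‖) := by
        gcongr with k hk
        · exact hδ k (mem_range.mp hk)
        · exact hbound φ
        · simpa only [ContinuousLinearMap.opNorm_flip] using hbound φ.flip
    _ = n * δ + 2 * L * ‖φ‖ := by rw [sum_const, card_range, nsmul_eq_mul]; ring

end Bilinear

section CStarAlgebra

variable {A Z : Type*} [CStarAlgebra A] [NormedAddCommGroup Z] [NormedSpace ℂ Z]

theorem spectrum_subset_Icc_of_norm_le_one {x : A} (hx : ‖x‖ ≤ 1) :
    spectrum ℝ x ⊆ Set.Icc (-1) 1 := by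
  nontriviality A
  exact fun t ht => abs_le.mp <| by simpa using (spectrum.norm_le_norm_of_mem ht).trans hx

theorem norm_sum_smul_cfc_sub_le_one (x : A) {f : ℕ → ℝ → ℝ} (hf : ∀ k, Continuous (f k))
    (hf_succ : ∀ k t, f (k + 1) t ≤ f k t) (hf_nonneg : ∀ k t, 0 ≤ f k t)
    (hf_zero : ∀ t, f 0 t ≤ 1) {z : ℕ → ℝ} (hz : ∀ k, |z k| ≤ 1) (m : ℕ) :
    ‖∑ k ∈ range m, z k • (cfc (f k) x - cfc (f (k + 1)) x)‖ ≤ 1 := by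
  have hcfc : ∑ k ∈ range m, z k • (cfc (f k) x - cfc (f (k + 1)) x)
      = cfc (fun t => ∑ k ∈ range m, z k * (f k t - f (k + 1) t)) x := by
    rw [← Finset.sum_fn, cfc_sum _ _ _ fun k _ => by fun_prop]
    refine sum_congr rfl fun k _ => ?_
    rw [cfc_const_mul _ _ _ (by fun_prop), cfc_sub _ _ _ (by fun_prop) (by fun_prop)]
  rw [hcfc]
  refine norm_cfc_le zero_le_one fun t _ => ?_
  rw [Real.norm_eq_abs]
  linarith [abs_sum_mul_sub_le (a := fun k => f k t) (fun k => hf_succ k t) hz m, hf_zero t,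
    hf_nonneg m t]

theorem cfc_ramp_self_add_one_eq_zero {x : A} (hx₁ : ‖x‖ ≤ 1) (n : ℕ) :
    cfc (ramp n (n + 1)) x = 0 := by
  rw [← cfc_const_zero ℝ x]
  exact cfc_congr fun t ht =>
    ramp_self_add_one_eq_zero (spectrum_subset_Icc_of_norm_le_one hx₁ ht).2

theorem sum_range_cfc_ramp_succ {x : A} (hx : IsSelfAdjoint x) (hx₁ : ‖x‖ ≤ 1) (n : ℕ) :
    ∑ k ∈ range n, cfc (ramp n (k + 1)) x = ((n : ℝ) / 2) • (x + 1) := by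
  calc ∑ k ∈ range n, cfc (ramp n (k + 1)) x
        = cfc (fun t => ∑ k ∈ range n, ramp n (k + 1) t) x := by
        rw [← Finset.sum_fn, cfc_sum _ _ _ fun k _ => (continuous_ramp n (k + 1)).continuousOn]
    _ = cfc (fun t => (n : ℝ) / 2 * (t + 1)) x := cfc_congr fun t ht => by
        rw [sum_range_ramp_succ (spectrum_subset_Icc_of_norm_le_one hx₁ ht)]; ring
    _ = ((n : ℝ) / 2) • (x + 1) := by
        rw [cfc_const_mul _ _ x, cfc_add_const _ _ x, cfc_id' ℝ x, map_one]

variable [PartialOrder A] [StarOrderedRing A]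

theorem norm_apply_sub_apply_swap_le (φ : A →L[ℂ] A →L[ℂ] Z) {ε : ℝ} (hε : 0 ≤ ε)
    (h : ∀ a b : A, 0 ≤ a → 0 ≤ b → a * b = 0 → ‖φ a b‖ ≤ ε * ‖a‖ * ‖b‖)
    {a b : A} (ha : 0 ≤ a) (hb : 0 ≤ b) (ha₁ : ‖a‖ ≤ 1) (hb₁ : ‖b‖ ≤ 1) (hab : a * b = 0) :
    ‖φ a b - φ b a‖ ≤ 2 * ε := by
  have hba : b * a = 0 := by
    simpa [ha.isSelfAdjoint.star_eq, hb.isSelfAdjoint.star_eq] using congrArg star hab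
  have hle : ∀ u v : A, ‖u‖ ≤ 1 → ‖v‖ ≤ 1 → ε * ‖u‖ * ‖v‖ ≤ ε := fun u v hu hv =>
    calc ε * ‖u‖ * ‖v‖ ≤ ε * 1 * 1 := by gcongr
      _ = ε := by ring
  calc ‖φ a b - φ b a‖ ≤ ‖φ a b‖ + ‖φ b a‖ := norm_sub_le _ _
    _ ≤ ε + ε := add_le_add ((h a b ha hb hab).trans (hle a b ha₁ hb₁))
        ((h b a hb ha hba).trans (hle b a hb₁ ha₁))
    _ = 2 * ε := by ring

theorem norm_apply_cfc_sub_apply_cfc_le (φ : A →L[ℂ] A →L[ℂ] Z) {ε : ℝ} (hε : 0 ≤ ε)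
    (h : ∀ a b : A, 0 ≤ a → 0 ≤ b → a * b = 0 → ‖φ a b‖ ≤ ε * ‖a‖ * ‖b‖) (x : A)
    {f g : ℝ → ℝ} (hf : Continuous f) (hg : Continuous g) (hf₁ : ∀ t, f t ∈ Set.Icc 0 1)
    (hg₁ : ∀ t, g t ∈ Set.Icc 0 1) (hfg : ∀ t, f t * g t = 0) :
    ‖φ (cfc f x) (cfc g x) - φ (cfc g x) (cfc f x)‖ ≤ 2 * ε := by
  have hnorm : ∀ u : ℝ → ℝ, (∀ t, u t ∈ Set.Icc 0 1) → ‖cfc u x‖ ≤ 1 := fun u hu =>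
    norm_cfc_le zero_le_one fun t _ => abs_le.mpr ⟨by linarith [(hu t).1], (hu t).2⟩
  refine norm_apply_sub_apply_swap_le φ hε h (cfc_nonneg fun t _ => (hf₁ t).1)
    (cfc_nonneg fun t _ => (hg₁ t).1) (hnorm f hf₁) (hnorm g hg₁) ?_
  rw [← cfc_mul f g x, funext hfg, cfc_const_zero]

theorem norm_apply_cfc_ramp_sub_apply_le (φ : A →L[ℂ] A →L[ℂ] Z) {ε : ℝ} (hε : 0 ≤ ε)
    (h : ∀ a b : A, 0 ≤ a → 0 ≤ b → a * b = 0 → ‖φ a b‖ ≤ ε * ‖a‖ * ‖b‖)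
    {x : A} (hx : IsSelfAdjoint x) (n k : ℕ) :
    ‖φ (cfc (ramp n (k + 1)) x) (1 - cfc (ramp n k) x)
      - φ (1 - cfc (ramp n k) x) (cfc (ramp n (k + 1)) x)‖ ≤ 2 * ε := by
  rw [← cfc_const_one ℝ x, ← cfc_sub _ _ x continuousOn_const (continuous_ramp n k).continuousOn]
  exact norm_apply_cfc_sub_apply_cfc_le φ hε h x (continuous_ramp n (k + 1))
    (continuous_const.sub (continuous_ramp n k)) (ramp_mem_Icc n (k + 1))
    (fun t => ⟨sub_nonneg.mpr (ramp_mem_Icc n k t).2, sub_le_self _ (ramp_mem_Icc n k t).1⟩)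
    (ramp_succ_mul_one_sub n k)

theorem norm_apply_one_sub_apply_one_le_of_pow (φ : A →L[ℂ] A →L[ℂ] Z) {ε : ℝ}
    (hε : 0 ≤ ε) (h : ∀ a b : A, 0 ≤ a → 0 ≤ b → a * b = 0 → ‖φ a b‖ ≤ ε * ‖a‖ * ‖b‖)
    {x : A} (hx : IsSelfAdjoint x) (hx₁ : ‖x‖ ≤ 1) {L : ℕ} (hL : 1 ≤ L) :
    ‖φ x 1 - φ 1 x‖ ≤ 4 * ε + 4 * L * ‖φ‖ / (2 ^ L - 1) := by
  obtain ⟨n, hn⟩ : ∃ n, n + 1 = 2 ^ L := ⟨2 ^ L - 1, Nat.sub_add_cancel Nat.one_le_two_pow⟩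
  have hnR : (n : ℝ) = 2 ^ L - 1 := by
    rw [eq_sub_iff_add_eq]; exact_mod_cast hn
  have hn₀ : (0 : ℝ) < n := by
    have : 2 ≤ 2 ^ L := Nat.le_self_pow (by omega) 2
    exact_mod_cast (by omega : 0 < n)
  set e : ℕ → A := fun k => cfc (ramp n k) x
  have hx_eq : x = ((2 : ℝ) / n) • ∑ k ∈ range n, e (k + 1) - 1 := by
    rw [sum_range_cfc_ramp_succ hx hx₁ n, smul_smul, div_mul_div_cancel₀ (by positivity),
      div_self two_ne_zero, one_smul, add_sub_cancel_right]
  have hδ : ∀ k < n, ‖φ (e (k + 1)) (1 - e k) - φ (1 - e k) (e (k + 1))‖ ≤ 2 * ε :=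
    fun k _ => norm_apply_cfc_ramp_sub_apply_le φ hε h hx n k
  have hd : ∀ z : ℕ → ℝ, (∀ i, |z i| ≤ 1) →
      ‖∑ i ∈ range (n + 1), z i • (e i - e (i + 1))‖ ≤ 1 := fun z hz =>
    norm_sum_smul_cfc_sub_le_one x (continuous_ramp n) (ramp_succ_le n)
      (fun k t => (ramp_mem_Icc n k t).1) (fun t => (ramp_mem_Icc n 0 t).2) hz (n + 1)
  have hbound := norm_sum_apply_sub_apply_le φ 1 e hn (cfc_ramp_self_add_one_eq_zero hx₁ n) hδ hd
  have hcomm : φ x 1 - φ 1 x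
      = ((2 : ℝ) / n) • ∑ k ∈ range n, (φ (e (k + 1)) 1 - φ 1 (e (k + 1))) := by
    conv_lhs => rw [hx_eq]
    simp only [map_sub, ContinuousLinearMap.map_smul_of_tower, map_sum, sub_apply, smul_apply,
      _root_.sum_apply, sum_sub_distrib, smul_sub]
    abel
  rw [hcomm, norm_smul, Real.norm_of_nonneg (by positivity), ← hnR]
  calc 2 / n * ‖∑ k ∈ range n, (φ (e (k + 1)) 1 - φ 1 (e (k + 1)))‖
      ≤ 2 / n * (n * (2 * ε) + 2 * L * ‖φ‖) := by gcongr
    _ = 4 * ε + 4 * L * ‖φ‖ / n := by field_simp; ring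

theorem norm_apply_one_sub_apply_one_le_of_norm_le_one (φ : A →L[ℂ] A →L[ℂ] Z)
    {ε : ℝ} (hε : 0 ≤ ε) (h : ∀ a b : A, 0 ≤ a → 0 ≤ b → a * b = 0 → ‖φ a b‖ ≤ ε * ‖a‖ * ‖b‖)
    {x : A} (hx : IsSelfAdjoint x) (hx₁ : ‖x‖ ≤ 1) :
    ‖φ x 1 - φ 1 x‖ ≤ 4 * ε := by
  have hlim : Tendsto (fun L : ℕ => 4 * ε + 4 * ‖φ‖ * ((L : ℝ) / (2 ^ L - 1))) atTop
      (𝓝 (4 * ε)) := by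
    simpa using (tendsto_natCast_div_two_pow_sub_one.const_mul (4 * ‖φ‖)).const_add (4 * ε)
  refine ge_of_tendsto hlim ?_
  filter_upwards [eventually_ge_atTop 1] with L hL
  calc _ ≤ _ := norm_apply_one_sub_apply_one_le_of_pow φ hε h hx hx₁ hL
    _ = _ := by ring

theorem norm_apply_one_sub_apply_one_le_of_isSelfAdjoint
    (φ : A →L[ℂ] A →L[ℂ] Z) {ε : ℝ} (hε : 0 ≤ ε)
    (h : ∀ a b : A, 0 ≤ a → 0 ≤ b → a * b = 0 → ‖φ a b‖ ≤ ε * ‖a‖ * ‖b‖)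
    {x : A} (hx : IsSelfAdjoint x) :
    ‖φ x 1 - φ 1 x‖ ≤ 4 * ε * ‖x‖ := by
  rcases eq_or_ne x 0 with rfl | hx₀
  · simp
  have hr : 0 < ‖x‖ := norm_pos_iff.mpr hx₀
  have hunit := norm_apply_one_sub_apply_one_le_of_norm_le_one φ hε h
    ((IsSelfAdjoint.all ‖x‖⁻¹).smul hx) (norm_smul_inv_norm hx₀).le
  have hscale : φ x 1 - φ 1 x = ‖x‖ • (φ (‖x‖⁻¹ • x) 1 - φ 1 (‖x‖⁻¹ • x)) := by
    simp only [ContinuousLinearMap.map_smul_of_tower, smul_apply, ← smul_sub, smul_smul,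
      mul_inv_cancel₀ hr.ne', one_smul]
  rw [hscale, norm_smul, Real.norm_of_nonneg hr.le]
  linarith [mul_le_mul_of_nonneg_left hunit hr.le]

end CStarAlgebra

theorem norm_apply_le_of_forall_isSelfAdjoint {A Z : Type*} [NormedAddCommGroup A]
    [StarAddMonoid A] [NormedSpace ℂ A] [StarModule ℂ A] [NormedStarGroup A]
    [NormedAddCommGroup Z] [NormedSpace ℂ Z] (ψ : A →L[ℂ] Z) {C : ℝ} (hC : 0 ≤ C)
    (hψ : ∀ y, IsSelfAdjoint y → ‖ψ y‖ ≤ C * ‖y‖) (a : A) :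
    ‖ψ a‖ ≤ 2 * C * ‖a‖ := by
  calc ‖ψ a‖ = ‖ψ (ℜ a) + Complex.I • ψ (ℑ a)‖ := by
        rw [← map_smul, ← map_add, realPart_add_I_smul_imaginaryPart]
    _ ≤ ‖ψ (ℜ a)‖ + ‖ψ (ℑ a)‖ := by
        simpa [norm_smul] using norm_add_le (ψ (ℜ a)) (Complex.I • ψ (ℑ a))
    _ ≤ C * ‖a‖ + C * ‖a‖ := by
        gcongr
        · exact (hψ _ (ℜ a).2).trans (by gcongr; exact realPart.norm_le a)
        · exact (hψ _ (ℑ a).2).trans (by gcongr; exact imaginaryPart.norm_le a)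
    _ = 2 * C * ‖a‖ := by ring

theorem stmt0 {A Z : Type*} [CStarAlgebra A] [PartialOrder A] [StarOrderedRing A]
    [NormedAddCommGroup Z] [NormedSpace ℂ Z]
    (φ : A →L[ℂ] A →L[ℂ] Z) (ε : ℝ) (hε : 0 ≤ ε)
    (h : ∀ a b : A, 0 ≤ a → 0 ≤ b → a * b = 0 → ‖φ a b‖ ≤ ε * ‖a‖ * ‖b‖) :
    ∀ a : A, ‖φ a 1 - φ 1 a‖ ≤ 8 * ε * ‖a‖ := by
  intro a
  have hψ : ∀ y, (φ.flip 1 - φ 1) y = φ y 1 - φ 1 y := fun y => rfl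
  calc ‖φ a 1 - φ 1 a‖ ≤ 2 * (4 * ε) * ‖a‖ := hψ a ▸
        norm_apply_le_of_forall_isSelfAdjoint (φ.flip 1 - φ 1) (by positivity)
          (fun y hy => hψ y ▸ norm_apply_one_sub_apply_one_le_of_isSelfAdjoint φ hε h hy) a
    _ = 8 * ε * ‖a‖ := by ring
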